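/- arXiv:1310.4141 — 7 statements merged into one kernel-verified Lean document; each statement's English description precedes it below -/
import Mathlib

section
/- Let D be a directed acyclic graph and let f be a topological additive numbering of D (i.e., a labeling f : V → positive integers such that S(u) < S(v) for every arc (u,v), where S(v) = Σ_{w ∈ N(v)} f(w) and N(v) is the set of neighbors of v in the underlying undirected graph). Let Q be a clique of the underlying graph, and let q_F and q_L be the vertices of Q that are, respectively, minimal and maximal with respect to the ordering induced by the arcs within Q (i.e., all arcs inside Q go from smaller to larger vertices in a fixed topological order). If all labels of f are at most k, then k ≥ ⌈(d(q_F)+1)/(d(q_L)−|Q|+2)⌉, where d(v) denotes the degree of v in the underlying graph. -/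
open Finset

/-- Neighborhood of `v` in the underlying undirected graph of the digraph `A`. -/
def nbr {V : Type} [Fintype V] [DecidableEq V] (A : V → V → Prop) [DecidableRel A] (v : V) :
    Finset V := Finset.univ.filter fun w => A v w ∨ A w v

/-- `S(v) = Σ_{w ∈ N(v)} f(w)`. -/
def Svert {V : Type} [Fintype V] [DecidableEq V] (A : V → V → Prop) [DecidableRel A]
    (f : V → ℕ) (v : V) : ℕ := ∑ w ∈ nbr A v, f w

/-- `f` is a topological additive numbering: positive labels with `S(u) < S(v)` on every arc. -/
def IsTAN {V : Type} [Fintype V] [DecidableEq V] (A : V → V → Prop) [DecidableRel A]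
    (f : V → ℕ) : Prop := (∀ v, 1 ≤ f v) ∧ ∀ u v, A u v → Svert A f u < Svert A f v

/-- The digraph `A` is acyclic. -/
def Acyclic {V : Type} (A : V → V → Prop) : Prop := ∀ v, ¬ Relation.TransGen A v v

/-- The topological additive number `η_t(D)`. -/
noncomputable def etat {V : Type} [Fintype V] [DecidableEq V] (A : V → V → Prop) [DecidableRel A] : ℕ :=
  sInf {k | ∃ f, IsTAN A f ∧ ∀ v, f v ≤ k}

/-! The labels `S` on a clique `Q` are pairwise distinct (any two vertices of `Q` are joined by an arc)
and lie between `S(q_F)` and `S(q_L)`, so `S(q_F) + |Q| - 1 ≤ S(q_L)`. On the other hand every vertex of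
`Q` other than `q_F` is a neighbour of `q_F` and every vertex other than `q_L` is a neighbour of `q_L`;
bounding the labels of the remaining neighbours of `q_F` below by `1` and those of `q_L` above by `k`
gives `d(q_F) + 1 ≤ (d(q_L) - |Q| + 2) k`. -/

section

variable {V : Type} [Fintype V] [DecidableEq V] {A : V → V → Prop} [DecidableRel A] {f : V → ℕ}

@[simp]
theorem mem_nbr {v w : V} : w ∈ nbr A v ↔ A v w ∨ A w v := by
  simp [nbr]

theorem IsTAN.injOn_Svert (htan : IsTAN A f) {Q : Finset V}
    (hclique : ∀ q₁ ∈ Q, ∀ q₂ ∈ Q, q₁ ≠ q₂ → (A q₁ q₂ ∨ A q₂ q₁)) :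
    Set.InjOn (Svert A f) Q := by
  intro a ha b hb hab
  by_contra hne
  rcases hclique a ha b hb hne with h | h
  · exact (htan.2 a b h).ne hab
  · exact (htan.2 b a h).ne hab.symm

theorem IsTAN.Svert_add_card_le (htan : IsTAN A f) {Q : Finset V}
    (hclique : ∀ q₁ ∈ Q, ∀ q₂ ∈ Q, q₁ ≠ q₂ → (A q₁ q₂ ∨ A q₂ q₁))
    {qF qL : V} (hqF : qF ∈ Q) (hFmin : ∀ q ∈ Q, q ≠ qF → A qF q)
    (hLmax : ∀ q ∈ Q, q ≠ qL → A q qL) :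
    Svert A f qF + Q.card ≤ Svert A f qL + 1 := by
  have hmaps : ∀ q ∈ Q, Svert A f q ∈ Icc (Svert A f qF) (Svert A f qL) := by
    intro q hq
    refine mem_Icc.2 ⟨?_, ?_⟩
    · rcases eq_or_ne q qF with rfl | h
      · exact le_rfl
      · exact (htan.2 _ _ (hFmin q hq h)).le
    · rcases eq_or_ne q qL with rfl | h
      · exact le_rfl
      · exact (htan.2 _ _ (hLmax q hq h)).le
  have hcard := card_le_card_of_injOn _ hmaps (htan.injOn_Svert hclique)
  have hle := mem_Icc.1 (hmaps qF hqF)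
  rw [Nat.card_Icc] at hcard
  omega

theorem card_nbr_add_sum_le_Svert_add_card (hf : ∀ w, 1 ≤ f w) {v : V} {s : Finset V}
    (hs : s ⊆ nbr A v) :
    (nbr A v).card + ∑ w ∈ s, f w ≤ Svert A f v + s.card := by
  have hrest : (nbr A v \ s).card ≤ ∑ w ∈ nbr A v \ s, f w := by
    simpa using card_nsmul_le_sum (nbr A v \ s) f 1 fun w _ => hf w
  rw [Svert, ← sum_sdiff hs, ← card_sdiff_add_card_eq_card hs]
  omega

theorem Svert_le_card_sdiff_mul_add_sum {k : ℕ} (hk : ∀ w, f w ≤ k) {v : V} {s : Finset V}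
    (hs : s ⊆ nbr A v) :
    Svert A f v ≤ ((nbr A v).card - s.card) * k + ∑ w ∈ s, f w := by
  rw [Svert, ← sum_sdiff hs, ← card_sdiff_of_subset hs]
  gcongr
  simpa using sum_le_card_nsmul (nbr A v \ s) f k fun w _ => hk w

end

theorem stmt_0_general {V : Type} [Fintype V] [DecidableEq V] (A : V → V → Prop) [DecidableRel A]
    (f : V → ℕ) (k : ℕ)
    (htan : IsTAN A f) (hk : ∀ v, f v ≤ k)
    (Q : Finset V) (hclique : ∀ q₁ ∈ Q, ∀ q₂ ∈ Q, q₁ ≠ q₂ → (A q₁ q₂ ∨ A q₂ q₁))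
    (qF qL : V) (hqF : qF ∈ Q) (hqL : qL ∈ Q)
    (hFmin : ∀ q ∈ Q, q ≠ qF → A qF q)
    (hLmax : ∀ q ∈ Q, q ≠ qL → A q qL) :
    ((nbr A qF).card + 1) ⌈/⌉ ((nbr A qL).card - Q.card + 2) ≤ k := by
  have hsubF : Q.erase qF ⊆ nbr A qF := fun q hq =>
    mem_nbr.2 (Or.inl (hFmin q (mem_of_mem_erase hq) (ne_of_mem_erase hq)))
  have hsubL : Q.erase qL ⊆ nbr A qL := fun q hq =>
    mem_nbr.2 (Or.inr (hLmax q (mem_of_mem_erase hq) (ne_of_mem_erase hq)))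
  have hlow := card_nbr_add_sum_le_Svert_add_card htan.1 hsubF
  have hchain := htan.Svert_add_card_le hclique hqF hFmin hLmax
  have hupp := Svert_le_card_sdiff_mul_add_sum hk hsubL
  have hsum : ∑ w ∈ Q.erase qL, f w + f qL = ∑ w ∈ Q.erase qF, f w + f qF := by
    rw [sum_erase_add _ _ hqL, sum_erase_add _ _ hqF]
  have hQ : 0 < Q.card := card_pos.2 ⟨qF, hqF⟩
  have hfqL := htan.1 qL
  have hfqF := hk qF
  rw [card_erase_of_mem hqF] at hlow
  rw [card_erase_of_mem hqL] at hupp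
  rw [ceilDiv_le_iff_le_mul (by omega)]
  calc (nbr A qF).card + 1 ≤ ((nbr A qL).card - (Q.card - 1)) * k + k := by omega
    _ = ((nbr A qL).card - (Q.card - 1) + 1) * k := by ring
    _ ≤ ((nbr A qL).card - Q.card + 2) * k := Nat.mul_le_mul_right k (by omega)

/-- clique lower bound for the largest label of a topological additive numbering. -/
theorem stmt_0 {V : Type} [Fintype V] [DecidableEq V] (A : V → V → Prop) [DecidableRel A]
    (hacyc : Acyclic A) (f : V → ℕ) (k : ℕ)
    (htan : IsTAN A f) (hk : ∀ v, f v ≤ k)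
    (Q : Finset V) (hclique : ∀ q₁ ∈ Q, ∀ q₂ ∈ Q, q₁ ≠ q₂ → (A q₁ q₂ ∨ A q₂ q₁))
    (qF qL : V) (hqF : qF ∈ Q) (hqL : qL ∈ Q)
    (hFmin : ∀ q ∈ Q, q ≠ qF → A qF q)
    (hLmax : ∀ q ∈ Q, q ≠ qL → A q qL) :
    ((nbr A qF).card + 1) ⌈/⌉ ((nbr A qL).card - Q.card + 2) ≤ k :=
  stmt_0_general A f k htan hk Q hclique qF qL hqF hqL hFmin hLmax
end

section
/- Let D be a directed acyclic graph and u, v two vertices such that N(u) ⊆ N(v) (neighborhoods in the underlying undirected graph). If there is a directed path from v to u in D, then D admits no topological additive numbering, i.e., there is no labeling f : V → positive integers with S(x) < S(y) for every arc (x,y), where S(x) = Σ_{w∈N(x)} f(w). -/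
open Finset

theorem Relation.TransGen.lt_of_forall_lt {α β : Type*} [Preorder β] {r : α → α → Prop}
    {g : α → β} (hg : ∀ a b, r a b → g a < g b) {a b : α} (h : Relation.TransGen r a b) :
    g a < g b := by
  simpa only [Relation.transGen_eq_self] using h.lift g hg

theorem Svert_le_of_nbr_subset {V : Type} [Fintype V] [DecidableEq V] (A : V → V → Prop)
    [DecidableRel A] (f : V → ℕ) {u v : V} (h : nbr A u ⊆ nbr A v) :
    Svert A f u ≤ Svert A f v :=
  sum_le_sum_of_subset h

theorem stmt_1_general {V : Type} [Fintype V] [DecidableEq V] (A : V → V → Prop) [DecidableRel A]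
    (u v : V)
    (hsub : nbr A u ⊆ nbr A v)
    (hpath : Relation.TransGen A v u) :
    ¬ ∃ f : V → ℕ, IsTAN A f := by
  rintro ⟨f, -, harc⟩
  exact (hpath.lt_of_forall_lt harc).not_ge (Svert_le_of_nbr_subset A f hsub)

/-- if `N(u) ⊆ N(v)` and there is a directed path from `v` to `u`,
then `D` has no topological additive numbering. -/
theorem stmt_1 {V : Type} [Fintype V] [DecidableEq V] (A : V → V → Prop) [DecidableRel A]
    (hacyc : Acyclic A) (u v : V)
    (hsub : nbr A u ⊆ nbr A v)
    (hpath : Relation.TransGen A v u) :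
    ¬ ∃ f : V → ℕ, IsTAN A f :=
  stmt_1_general A u v hsub hpath
end

section
/- Let D be a complete monotone r-partite digraph with parts V_1,…,V_r (so the underlying graph is complete r-partite and every arc from V_i to V_j satisfies i < j). Define s_r = |V_r| and s_i = max(1 + s_{i+1}, |V_i|) for i = r−1,…,1. Then D admits a topological additive numbering and η_t(D) = max{ ⌈s_i/|V_i|⌉ : i = 1,…,r }. -/
/-!
In a complete multipartite graph the neighbourhood of `v` is everything outside the part of `v`,
so `S(v)` is the total weight minus the weight `σ_i` of the part `V_i` containing `v`. Hence `f`
is a topological additive numbering iff the part sums `σ_1 > σ_2 > ⋯ > σ_r` strictly decrease.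
Positive labels give `σ_i ≥ |V_i|`, so backward induction gives `σ_i ≥ s_i`, and labels at most
`k` give `σ_i ≤ k |V_i|`, whence `k ≥ ⌈s_i / |V_i|⌉`. Conversely, spreading `s_i` over `V_i` as
evenly as possible gives labels at most `⌈s_i / |V_i|⌉` with part sums exactly `s_i`.
-/

open Finset

/-- The part `V_i`. -/
def partClass {V : Type} [Fintype V] (part : V → ℕ) (i : ℕ) : Finset V :=
  univ.filter fun v => part v = i

theorem exists_sum_eq_of_card_le_of_le_card_mul {V : Type} [DecidableEq V] (t : Finset V)
    {m q : ℕ} (hm : t.card ≤ m) (hmq : m ≤ t.card * q) :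
    ∃ g : V → ℕ, (∀ v ∈ t, 1 ≤ g v ∧ g v ≤ q) ∧ ∑ v ∈ t, g v = m := by
  induction t using Finset.induction_on generalizing m with
  | empty => exact ⟨fun _ => 0, by simp, by simp_all⟩
  | insert a t ha ih =>
    rw [card_insert_of_notMem ha] at hm hmq
    have hmq' : m ≤ t.card * q + q := by rwa [add_one_mul] at hmq
    have hq : 1 ≤ q := by
      by_contra! hq0
      simp only [Nat.lt_one_iff.mp hq0, mul_zero] at hmq'
      omega
    have hnq : t.card ≤ t.card * q := Nat.le_mul_of_pos_right _ hq
    -- put as much as possible, up to `q`, on `a`, leaving at least `1` for each vertex of `t`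
    set x := min q (m - t.card)
    obtain ⟨g, hg, hsum⟩ := ih (m := m - x) (by omega) (by omega)
    refine ⟨Function.update g a x, ?_, ?_⟩
    · intro v hv
      rcases mem_insert.mp hv with rfl | hv
      · simp only [Function.update_self]
        omega
      · rw [Function.update_of_ne (ne_of_mem_of_not_mem hv ha)]
        exact hg v hv
    · rw [sum_insert ha, Function.update_self,
        sum_congr rfl fun v hv => Function.update_of_ne (ne_of_mem_of_not_mem hv ha) x g, hsum]
      omega

section Recursion

variable {r : ℕ} {s c : ℕ → ℕ}

theorem max_recursion_strictAntiOn
    (hsrec : ∀ i, i + 1 < r → s i = max (1 + s (i + 1)) (c i)) :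
    StrictAntiOn s (Set.Iic (r - 1)) :=
  strictAntiOn_Iic_of_succ_lt fun i hi => by
    rw [hsrec i (by omega), Order.succ_eq_add_one]
    omega

theorem le_max_recursion (hslast : s (r - 1) = c (r - 1))
    (hsrec : ∀ i, i + 1 < r → s i = max (1 + s (i + 1)) (c i)) {i : ℕ} (hi : i < r) :
    c i ≤ s i := by
  rcases Nat.lt_or_ge (i + 1) r with h | h
  · exact (hsrec i h).symm ▸ le_max_right _ _
  · obtain rfl : i = r - 1 := by omega
    exact hslast.ge

theorem max_recursion_le {T : ℕ → ℕ} (hslast : s (r - 1) = c (r - 1))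
    (hsrec : ∀ i, i + 1 < r → s i = max (1 + s (i + 1)) (c i))
    (hcT : ∀ i < r, c i ≤ T i) (hT : ∀ i, i + 1 < r → T (i + 1) < T i) :
    ∀ i < r, s i ≤ T i := by
  intro i hi
  have hir : i ≤ r - 1 := by omega
  induction hir using Nat.decreasingInduction with
  | self => exact hslast ▸ hcT _ hi
  | of_succ k hk ih =>
    have := ih (by omega)
    have := hT k (by omega)
    have := hcT k hi
    rw [hsrec k (by omega)]
    omega

end Recursion

theorem arc_of_part_lt {V : Type} {A : V → V → Prop} {part : V → ℕ}
    (hcomplete : ∀ u v, (A u v ∨ A v u) ↔ part u ≠ part v)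
    (hmono : ∀ u v, A u v → part u < part v) {u v : V} (huv : part u < part v) : A u v :=
  ((hcomplete u v).2 huv.ne).resolve_right fun hvu => (hmono v u hvu).asymm huv

section CompleteMonotone

variable {V : Type} [Fintype V] [DecidableEq V] {A : V → V → Prop} [DecidableRel A]
  {part : V → ℕ}

theorem nbr_eq_filter_part_ne (hcomplete : ∀ u v, (A u v ∨ A v u) ↔ part u ≠ part v) (v : V) :
    nbr A v = univ.filter fun w => part w ≠ part v := by
  ext w
  simp only [nbr, mem_filter, mem_univ, true_and, hcomplete v w, ne_comm]

theorem Svert_add_sum_partClass (hcomplete : ∀ u v, (A u v ∨ A v u) ↔ part u ≠ part v)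
    (f : V → ℕ) (v : V) :
    Svert A f v + ∑ w ∈ partClass part (part v), f w = ∑ w, f w := by
  rw [Svert, nbr_eq_filter_part_ne hcomplete, add_comm]
  exact sum_filter_add_sum_filter_not _ _ _

theorem Svert_lt_Svert_iff (hcomplete : ∀ u v, (A u v ∨ A v u) ↔ part u ≠ part v)
    (f : V → ℕ) (u v : V) :
    Svert A f u < Svert A f v ↔
      ∑ w ∈ partClass part (part v), f w < ∑ w ∈ partClass part (part u), f w := by
  have hu := Svert_add_sum_partClass hcomplete f u
  have hv := Svert_add_sum_partClass hcomplete f v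
  omega

theorem isTAN_iff (hcomplete : ∀ u v, (A u v ∨ A v u) ↔ part u ≠ part v)
    (hmono : ∀ u v, A u v → part u < part v) (f : V → ℕ) :
    IsTAN A f ↔ (∀ v, 1 ≤ f v) ∧ ∀ u v, part u < part v →
      ∑ w ∈ partClass part (part v), f w < ∑ w ∈ partClass part (part u), f w := by
  simp only [IsTAN, ← Svert_lt_Svert_iff hcomplete]
  exact and_congr_right' ⟨fun h u v huv => h u v (arc_of_part_lt hcomplete hmono huv),
    fun h u v huv => h u v (hmono u v huv)⟩

theorem ceilDiv_le_of_isTAN (hcomplete : ∀ u v, (A u v ∨ A v u) ↔ part u ≠ part v)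
    (hmono : ∀ u v, A u v → part u < part v) {r : ℕ} (hnonempty : ∀ i < r, ∃ v, part v = i)
    {s : ℕ → ℕ} (hslast : s (r - 1) = (partClass part (r - 1)).card)
    (hsrec : ∀ i, i + 1 < r → s i = max (1 + s (i + 1)) (partClass part i).card)
    {f : V → ℕ} (hf : IsTAN A f) {k : ℕ} (hfk : ∀ v, f v ≤ k) {i : ℕ} (hi : i < r) :
    s i ⌈/⌉ (partClass part i).card ≤ k := by
  obtain ⟨hpos, hsum⟩ := (isTAN_iff hcomplete hmono f).1 hf
  have hcard : ∀ j, (partClass part j).card ≤ ∑ w ∈ partClass part j, f w := fun j => by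
    simpa using card_nsmul_le_sum _ f 1 fun w _ => hpos w
  have hdec : ∀ j, j + 1 < r →
      ∑ w ∈ partClass part (j + 1), f w < ∑ w ∈ partClass part j, f w := fun j hj => by
    obtain ⟨u, rfl⟩ := hnonempty j (by omega)
    obtain ⟨v, hv⟩ := hnonempty (part u + 1) hj
    simpa only [hv] using hsum u v (by omega)
  have hsi := max_recursion_le hslast hsrec (fun j _ => hcard j) hdec i hi
  obtain ⟨v, hv⟩ := hnonempty i hi
  rw [ceilDiv_le_iff_le_mul (card_pos.2 ⟨v, by simp [partClass, hv]⟩)]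
  calc s i ≤ ∑ w ∈ partClass part i, f w := hsi
    _ ≤ ∑ _w ∈ partClass part i, k := sum_le_sum fun w _ => hfk w
    _ = (partClass part i).card * k := by rw [sum_const, smul_eq_mul]

theorem exists_isTAN_le_ceilDiv (hcomplete : ∀ u v, (A u v ∨ A v u) ↔ part u ≠ part v)
    (hmono : ∀ u v, A u v → part u < part v) {r : ℕ} (hpart : ∀ v, part v < r)
    (hnonempty : ∀ i < r, ∃ v, part v = i)
    {s : ℕ → ℕ} (hslast : s (r - 1) = (partClass part (r - 1)).card)
    (hsrec : ∀ i, i + 1 < r → s i = max (1 + s (i + 1)) (partClass part i).card) :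
    ∃ f : V → ℕ, IsTAN A f ∧ ∀ v, f v ≤ s (part v) ⌈/⌉ (partClass part (part v)).card := by
  have hsplit : ∀ i, ∃ g : V → ℕ, i < r →
      (∀ v ∈ partClass part i, 1 ≤ g v ∧ g v ≤ s i ⌈/⌉ (partClass part i).card) ∧
        ∑ v ∈ partClass part i, g v = s i := fun i => by
    by_cases hi : i < r
    · obtain ⟨v, hv⟩ := hnonempty i hi
      have hpos : 0 < (partClass part i).card := card_pos.2 ⟨v, by simp [partClass, hv]⟩
      obtain ⟨g, hg⟩ := exists_sum_eq_of_card_le_of_le_card_mul (partClass part i)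
        (le_max_recursion hslast hsrec hi) ((ceilDiv_le_iff_le_mul hpos).1 le_rfl)
      exact ⟨g, fun _ => hg⟩
    · exact ⟨0, fun h => absurd h hi⟩
  choose g hg using hsplit
  have hmem : ∀ v, v ∈ partClass part (part v) := fun v => by simp [partClass]
  have hsum : ∀ v, ∑ w ∈ partClass part (part v), g (part w) w = s (part v) := fun v => by
    rw [← (hg _ (hpart v)).2]
    exact sum_congr rfl fun w hw => by rw [(mem_filter.1 hw).2]
  refine ⟨fun v => g (part v) v, (isTAN_iff hcomplete hmono _).2 ⟨?_, ?_⟩, ?_⟩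
  · exact fun v => ((hg _ (hpart v)).1 v (hmem v)).1
  · intro u v huv
    rw [hsum, hsum]
    exact max_recursion_strictAntiOn hsrec (Set.mem_Iic.2 (by have := hpart u; omega))
      (Set.mem_Iic.2 (by have := hpart v; omega)) huv
  · exact fun v => ((hg _ (hpart v)).1 v (hmem v)).2

end CompleteMonotone

theorem stmt_4_general {V : Type} [Fintype V] [DecidableEq V] (A : V → V → Prop) [DecidableRel A]
    (r : ℕ) (part : V → ℕ) (hpart : ∀ v, part v < r)
    (hnonempty : ∀ i < r, ∃ v, part v = i)
    (hcomplete : ∀ u v, (A u v ∨ A v u) ↔ part u ≠ part v)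
    (hmono : ∀ u v, A u v → part u < part v)
    (s : ℕ → ℕ)
    (hslast : s (r - 1) = (Finset.univ.filter fun v => part v = r - 1).card)
    (hsrec : ∀ i, i + 1 < r →
      s i = max (1 + s (i + 1)) (Finset.univ.filter fun v => part v = i).card) :
    (∃ f : V → ℕ, IsTAN A f) ∧
    etat A = (Finset.range r).sup
      (fun i => s i ⌈/⌉ (Finset.univ.filter fun v => part v = i).card) := by
  obtain ⟨f, hf, hfle⟩ := exists_isTAN_le_ceilDiv hcomplete hmono hpart hnonempty hslast hsrec
  refine ⟨⟨f, hf⟩, IsLeast.csInf_eq ⟨⟨f, hf, fun v => ?_⟩, ?_⟩⟩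
  · exact (hfle v).trans (le_sup (f := fun i => s i ⌈/⌉ (partClass part i).card)
      (mem_range.2 (hpart v)))
  · rintro k ⟨f', hf', hf'k⟩
    exact Finset.sup_le fun i hi =>
      ceilDiv_le_of_isTAN hcomplete hmono hnonempty hslast hsrec hf' hf'k (mem_range.1 hi)

/-- `η_t` of a complete monotone `r`-partite digraph. -/
theorem stmt_4 {V : Type} [Fintype V] [DecidableEq V] (A : V → V → Prop) [DecidableRel A]
    (r : ℕ) (hr : 1 ≤ r) (part : V → ℕ) (hpart : ∀ v, part v < r)
    (hnonempty : ∀ i < r, ∃ v, part v = i)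
    (hcomplete : ∀ u v, (A u v ∨ A v u) ↔ part u ≠ part v)
    (hmono : ∀ u v, A u v → part u < part v)
    (s : ℕ → ℕ)
    (hslast : s (r - 1) = (Finset.univ.filter fun v => part v = r - 1).card)
    (hsrec : ∀ i, i + 1 < r →
      s i = max (1 + s (i + 1)) (Finset.univ.filter fun v => part v = i).card) :
    (∃ f : V → ℕ, IsTAN A f) ∧
    etat A = (Finset.range r).sup
      (fun i => s i ⌈/⌉ (Finset.univ.filter fun v => part v = i).card) :=
  stmt_4_general A r part hpart hnonempty hcomplete hmono s hslast hsrec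
end

section
/- Consider the variable gadget digraph for a variable x: vertices x, ¬x, x¹, x², x³, x⁴, x⁵, u¹,…,u⁶ (possibly embedded in a larger digraph where x and ¬x may have additional neighbors), with arcs (x¹,x), (x¹,¬x), (x²,x¹), (x³,x²), (x⁴,x²), (x⁵,x²), (u¹,x), (u²,x), (u³,x), (u⁴,¬x), (u⁵,¬x), (u⁶,¬x). If f is a topological additive 2-numbering of the containing digraph, then f(x) + f(¬x) ≥ 3. -/
open Finset

/-! In the gadget, `S(x²) = f(x¹) + f(x³) + f(x⁴) + f(x⁵) ≥ f(x¹) + 3`, while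
`S(x¹) = f(x) + f(¬x) + f(x²) ≤ f(x) + f(¬x) + 2`. The arc `(x², x¹)` forces
`S(x²) < S(x¹)`, hence `f(x) + f(¬x) > f(x¹) + 1 ≥ 2`. -/

theorem Finset.sum_insert_le_add {ι M : Type*} [DecidableEq ι] [AddCommMonoid M] [PartialOrder M]
    [CanonicallyOrderedAdd M] (f : ι → M) (a : ι) (s : Finset ι) :
    ∑ i ∈ insert a s, f i ≤ f a + ∑ i ∈ s, f i := by
  by_cases ha : a ∈ s
  · rw [insert_eq_of_mem ha]
    exact le_add_self
  · rw [sum_insert ha]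

theorem List.sum_toFinset_le {ι M : Type*} [DecidableEq ι] [AddCommMonoid M] [PartialOrder M]
    [CanonicallyOrderedAdd M] (f : ι → M) (l : List ι) :
    ∑ i ∈ l.toFinset, f i ≤ (l.map f).sum := by
  induction l with
  | nil => simp
  | cons a l ih =>
    rw [List.toFinset_cons, List.map_cons, List.sum_cons]
    exact (Finset.sum_insert_le_add f a _).trans (add_le_add_right ih _)

section

variable {V : Type} [Fintype V] [DecidableEq V] {A : V → V → Prop} [DecidableRel A]
  {f : V → ℕ} {v : V} {l : List V}

theorem Svert_le_of_nbr_eq (h : nbr A v = l.toFinset) : Svert A f v ≤ (l.map f).sum := by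
  rw [Svert, h]
  exact l.sum_toFinset_le f

theorem Svert_eq_of_nbr_eq (h : nbr A v = l.toFinset) (hl : l.Nodup) :
    Svert A f v = (l.map f).sum := by
  rw [Svert, h, List.sum_toFinset f hl]

end

theorem stmt_9_general {V : Type} [Fintype V] [DecidableEq V] (A : V → V → Prop) [DecidableRel A]
    (x nx x1 x2 x3 x4 x5 u1 u2 u3 u4 u5 u6 : V)
    (hdistinct : List.Pairwise (· ≠ ·) [x, nx, x1, x2, x3, x4, x5, u1, u2, u3, u4, u5, u6])
    (ha3 : A x2 x1)
    (hnx2 : nbr A x2 = {x1, x3, x4, x5})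
    (hnx1 : nbr A x1 = {x, nx, x2})
    (f : V → ℕ) (hf : ∀ v, 1 ≤ f v ∧ f v ≤ 2)
    (htan : ∀ u v, A u v → Svert A f u < Svert A f v) :
    3 ≤ f x + f nx := by
  have hsub : [x1, x3, x4, x5].Sublist [x, nx, x1, x2, x3, x4, x5, u1, u2, u3, u4, u5, u6] :=
    .cons _ <| .cons _ <| .cons_cons _ <| .cons _ <|
      .cons_cons _ <| .cons_cons _ <| .cons_cons _ <| List.nil_sublist _
  have hS2 : Svert A f x2 = f x1 + (f x3 + (f x4 + f x5)) := by
    simpa using Svert_eq_of_nbr_eq (f := f) (l := [x1, x3, x4, x5])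
      (by simpa using hnx2) (List.Nodup.sublist hsub hdistinct)
  have hS1 : Svert A f x1 ≤ f x + (f nx + f x2) := by
    simpa using Svert_le_of_nbr_eq (f := f) (l := [x, nx, x2]) (by simpa using hnx1)
  have harc := htan x2 x1 ha3
  have := hf x1; have := hf x2; have := hf x3; have := hf x4; have := hf x5
  omega

/-- variable gadget — any topological additive 2-numbering satisfies
`f(x) + f(¬x) ≥ 3`. -/
theorem stmt_9 {V : Type} [Fintype V] [DecidableEq V] (A : V → V → Prop) [DecidableRel A]
    (x nx x1 x2 x3 x4 x5 u1 u2 u3 u4 u5 u6 : V)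
    (hdistinct : List.Pairwise (· ≠ ·) [x, nx, x1, x2, x3, x4, x5, u1, u2, u3, u4, u5, u6])
    (ha1 : A x1 x) (ha2 : A x1 nx) (ha3 : A x2 x1)
    (ha4 : A x3 x2) (ha5 : A x4 x2) (ha6 : A x5 x2)
    (ha7 : A u1 x) (ha8 : A u2 x) (ha9 : A u3 x)
    (ha10 : A u4 nx) (ha11 : A u5 nx) (ha12 : A u6 nx)
    (hnx2 : nbr A x2 = {x1, x3, x4, x5})
    (hnx1 : nbr A x1 = {x, nx, x2})
    (f : V → ℕ) (hf : ∀ v, 1 ≤ f v ∧ f v ≤ 2)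
    (htan : ∀ u v, A u v → Svert A f u < Svert A f v) :
    3 ≤ f x + f nx :=
  stmt_9_general A x nx x1 x2 x3 x4 x5 u1 u2 u3 u4 u5 u6 hdistinct ha3 hnx2 hnx1 f hf htan
end

section
/- Consider the clause gadget digraph for a clause c = y ∨ z ∨ w: vertices c, c¹, c², c³, c⁴, c⁵ together with literal vertices y, z, w (distinct), with arcs (c,y), (c,z), (c,w), (c,c¹), (c²,c¹), (c³,c¹), (c⁴,c¹), (c⁵,c). If f is a topological additive 2-numbering of the containing digraph, then f(y) + f(z) + f(w) ≤ 5; in particular at least one of f(y), f(z), f(w) equals 1. -/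
/-!
The arc `(c, c¹)` forces `S(c) < S(c¹)`. The four neighbours of `c¹` carry labels at most `2`,
so `S(c¹) ≤ 8`, while `S(c) ≥ f(y) + f(z) + f(w) + 2` because `c¹` and `c⁵` carry labels at
least `1`. Hence `f(y) + f(z) + f(w) ≤ 5`, so the three literal labels cannot all be `2`.
-/

open Finset

section

variable {V : Type} [Fintype V] [DecidableEq V] (A : V → V → Prop) [DecidableRel A]

theorem Svert_le_mul_card {f : V → ℕ} {k : ℕ} (hf : ∀ v, f v ≤ k) (v : V) :
    Svert A f v ≤ #(nbr A v) * k :=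
  sum_le_card_nsmul (nbr A v) f k fun w _ => hf w

theorem Svert_eq_sum_of_nbr_eq_toFinset (f : V → ℕ) {v : V} {l : List V} (hl : l.Nodup)
    (h : nbr A v = l.toFinset) : Svert A f v = (l.map f).sum := by
  rw [Svert, h, List.sum_toFinset f hl]

end

theorem stmt_10_general {V : Type} [Fintype V] [DecidableEq V] (A : V → V → Prop) [DecidableRel A]
    (c c1 c2 c3 c4 c5 y z w : V)
    (hdistinct : List.Pairwise (· ≠ ·) [c, c1, c2, c3, c4, c5, y, z, w])
    (ha4 : A c c1)
    (hnc1 : nbr A c1 = {c, c2, c3, c4})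
    (hnc : nbr A c = {y, z, w, c1, c5})
    (f : V → ℕ) (hf : ∀ v, 1 ≤ f v ∧ f v ≤ 2)
    (htan : ∀ u v, A u v → Svert A f u < Svert A f v) :
    f y + f z + f w ≤ 5 ∧ (f y = 1 ∨ f z = 1 ∨ f w = 1) := by
  have hSc1 : Svert A f c1 ≤ 8 := by
    have hcard : #(nbr A c1) ≤ 4 := hnc1 ▸ card_le_four
    have := Svert_le_mul_card A (fun v => (hf v).2) c1
    omega
  have hSc : Svert A f c = f c1 + f c5 + f y + f z + f w := by
    have hnodup : [c1, c5, y, z, w].Nodup := hdistinct.sublist (by simp [List.sublist_cons_iff])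
    have hnbr : nbr A c = [c1, c5, y, z, w].toFinset := by
      rw [hnc]; ext; simp only [mem_insert, mem_singleton, List.toFinset_cons, List.toFinset_nil,
        insert_empty_eq]; tauto
    simp [Svert_eq_sum_of_nbr_eq_toFinset A f hnodup hnbr, add_assoc]
  have := htan c c1 ha4
  have := hf c1; have := hf c5; have := hf y; have := hf z; have := hf w
  omega

/-- clause gadget — any topological additive 2-numbering satisfies
`f(y) + f(z) + f(w) ≤ 5`, so at least one literal gets label 1. -/
theorem stmt_10 {V : Type} [Fintype V] [DecidableEq V] (A : V → V → Prop) [DecidableRel A]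
    (c c1 c2 c3 c4 c5 y z w : V)
    (hdistinct : List.Pairwise (· ≠ ·) [c, c1, c2, c3, c4, c5, y, z, w])
    (ha1 : A c y) (ha2 : A c z) (ha3 : A c w) (ha4 : A c c1)
    (ha5 : A c2 c1) (ha6 : A c3 c1) (ha7 : A c4 c1) (ha8 : A c5 c)
    (hnc1 : nbr A c1 = {c, c2, c3, c4})
    (hnc : nbr A c = {y, z, w, c1, c5})
    (f : V → ℕ) (hf : ∀ v, 1 ≤ f v ∧ f v ≤ 2)
    (htan : ∀ u v, A u v → Svert A f u < Svert A f v) :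
    f y + f z + f w ≤ 5 ∧ (f y = 1 ∨ f z = 1 ∨ f w = 1) :=
  stmt_10_general A c c1 c2 c3 c4 c5 y z w hdistinct ha4 hnc1 hnc f hf htan
end

section
/- Let D be a monotone complete bipartite digraph with parts V_1, V_2 (underlying graph complete bipartite, all arcs from V_1 to V_2). Then η_t(D) = max(⌈(|V_2|+1)/|V_1|⌉, 1) if |V_1| ≥ 1; equivalently, with s_2 = |V_2| and s_1 = max(1+|V_2|, |V_1|), η_t(D) = max(⌈s_1/|V_1|⌉, ⌈s_2/|V_2|⌉) = ⌈s_1/|V_1|⌉. -/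
open Finset

/-! In a monotone complete bipartite digraph every vertex of `V1` has neighbourhood `V2` and vice
versa, so `f` is a topological additive numbering iff `∑_{V2} f < ∑_{V1} f`. With labels in
`{1, …, k}` this gives `|V2| + 1 ≤ ∑_{V1} f ≤ k |V1|`, i.e. `k ≥ ⌈(|V2| + 1) / |V1|⌉`, and labelling
`V1` by that value and every other vertex by `1` attains the bound. -/

lemma Nat.ceilDiv_pos {a b : ℕ} (ha : 0 < a) (hb : 0 < b) : 0 < b ⌈/⌉ a :=
  Nat.pos_of_ne_zero fun h => by simpa [h] using (le_smul_ceilDiv (b := b) ha).trans_lt' hb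

lemma Nat.max_ceilDiv_self {a : ℕ} (ha : 0 < a) (b : ℕ) : max b a ⌈/⌉ a = max (b ⌈/⌉ a) 1 := by
  have hself : a ⌈/⌉ a = 1 := by simpa using smul_ceilDiv (β := ℕ) ha 1
  rw [(gc_mul_ceilDiv ha).monotone_l.map_max, hself]

section MonotoneCompleteBipartite

variable {V : Type} [Fintype V] [DecidableEq V] {A : V → V → Prop} [DecidableRel A]
  {V1 V2 : Finset V} (hdisj : Disjoint V1 V2) (harcs : ∀ u v, A u v ↔ (u ∈ V1 ∧ v ∈ V2))
include hdisj harcs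

lemma nbr_of_mem_left {u : V} (hu : u ∈ V1) : nbr A u = V2 := by
  ext w
  have := Finset.disjoint_left.mp hdisj hu
  simp only [nbr, mem_filter, mem_univ, true_and, harcs]
  tauto

lemma nbr_of_mem_right {v : V} (hv : v ∈ V2) : nbr A v = V1 := by
  ext w
  have := Finset.disjoint_right.mp hdisj hv
  simp only [nbr, mem_filter, mem_univ, true_and, harcs]
  tauto

lemma isTAN_iff_sum_lt_sum (h1 : V1.Nonempty) (h2 : V2.Nonempty) (f : V → ℕ) :
    IsTAN A f ↔ (∀ v, 1 ≤ f v) ∧ ∑ w ∈ V2, f w < ∑ w ∈ V1, f w := by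
  have hS : ∀ u v, A u v → (Svert A f u < Svert A f v ↔ ∑ w ∈ V2, f w < ∑ w ∈ V1, f w) := by
    intro u v huv
    obtain ⟨hu, hv⟩ := (harcs u v).mp huv
    rw [Svert, Svert, nbr_of_mem_left hdisj harcs hu, nbr_of_mem_right hdisj harcs hv]
  obtain ⟨u, hu⟩ := h1
  obtain ⟨v, hv⟩ := h2
  have huv : A u v := (harcs u v).mpr ⟨hu, hv⟩
  exact and_congr_right fun _ =>
    ⟨fun h => (hS u v huv).mp (h u v huv), fun h u' v' h' => (hS u' v' h').mpr h⟩

lemma ceilDiv_le_of_isTAN_s14 (h1 : V1.Nonempty) (h2 : V2.Nonempty) {f : V → ℕ} (hf : IsTAN A f)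
    {k : ℕ} (hk : ∀ v, f v ≤ k) : (V2.card + 1) ⌈/⌉ V1.card ≤ k := by
  obtain ⟨hpos, hsum⟩ := (isTAN_iff_sum_lt_sum hdisj harcs h1 h2 f).mp hf
  have hV2 : V2.card ≤ ∑ w ∈ V2, f w := by
    simpa using Finset.card_nsmul_le_sum V2 f 1 fun w _ => hpos w
  have hV1 : ∑ w ∈ V1, f w ≤ V1.card * k := by
    simpa using Finset.sum_le_card_nsmul V1 f k fun w _ => hk w
  rw [ceilDiv_le_iff_le_mul h1.card_pos]
  omega

lemma isTAN_ite (h1 : V1.Nonempty) (h2 : V2.Nonempty) :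
    IsTAN A fun v => if v ∈ V1 then (V2.card + 1) ⌈/⌉ V1.card else 1 := by
  set m := (V2.card + 1) ⌈/⌉ V1.card
  have hm : 0 < m := Nat.ceilDiv_pos h1.card_pos V2.card.add_one_pos
  rw [isTAN_iff_sum_lt_sum hdisj harcs h1 h2]
  refine ⟨fun v => by split <;> omega, ?_⟩
  rw [Finset.sum_ite_of_true fun _ h => h,
    Finset.sum_ite_of_false fun _ h => Finset.disjoint_right.mp hdisj h]
  simp only [Finset.sum_const, smul_eq_mul, mul_one]
  exact Nat.lt_of_succ_le (le_smul_ceilDiv h1.card_pos)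

lemma etat_eq_ceilDiv (h1 : V1.Nonempty) (h2 : V2.Nonempty) :
    etat A = (V2.card + 1) ⌈/⌉ V1.card := by
  refine IsLeast.csInf_eq ⟨⟨_, isTAN_ite hdisj harcs h1 h2, fun v => ?_⟩, ?_⟩
  · have := Nat.ceilDiv_pos h1.card_pos V2.card.add_one_pos
    split <;> omega
  · rintro k ⟨f, hf, hk⟩
    exact ceilDiv_le_of_isTAN_s14 hdisj harcs h1 h2 hf hk

end MonotoneCompleteBipartite

theorem stmt_14_general {V : Type} [Fintype V] [DecidableEq V] (A : V → V → Prop) [DecidableRel A]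
    (V1 V2 : Finset V) (hdisj : Disjoint V1 V2)
    (h1 : V1.Nonempty) (h2 : V2.Nonempty)
    (harcs : ∀ u v, A u v ↔ (u ∈ V1 ∧ v ∈ V2)) :
    etat A = max ((V2.card + 1) ⌈/⌉ V1.card) 1 ∧
    etat A = (max (1 + V2.card) V1.card) ⌈/⌉ V1.card := by
  have hη := etat_eq_ceilDiv hdisj harcs h1 h2
  have hpos := Nat.ceilDiv_pos h1.card_pos V2.card.add_one_pos
  rw [Nat.max_ceilDiv_self h1.card_pos, add_comm 1, hη, max_eq_left hpos]
  exact ⟨rfl, rfl⟩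

/-- `η_t` of a monotone complete bipartite digraph. -/
theorem stmt_14 {V : Type} [Fintype V] [DecidableEq V] (A : V → V → Prop) [DecidableRel A]
    (V1 V2 : Finset V) (hdisj : Disjoint V1 V2) (hcover : V1 ∪ V2 = Finset.univ)
    (h1 : V1.Nonempty) (h2 : V2.Nonempty)
    (harcs : ∀ u v, A u v ↔ (u ∈ V1 ∧ v ∈ V2)) :
    etat A = max ((V2.card + 1) ⌈/⌉ V1.card) 1 ∧
    etat A = (max (1 + V2.card) V1.card) ⌈/⌉ V1.card :=
  stmt_14_general A V1 V2 hdisj h1 h2 harcs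
end

section
/- Let f : V → {1,…,k} be a topological additive k-numbering of a DAG D, let Q be a clique in the underlying graph of D, and for q ∈ Q define Y_q = Σ_{w∈N(q)∖Q} f(w) − f(q). Then the map q ↦ Y_q is strictly increasing along the linear order of Q induced by the arcs, and |N(q)∖Q| − k ≤ Y_q ≤ k·|N(q)∖Q| − 1 for every q ∈ Q. -/
/-
Inside a clique `Q` the neighbourhood of `q ∈ Q` is `(N(q) ∖ Q) ∪ (Q ∖ {q})`, so
`S(q) = Y_q + Σ_{w ∈ Q} f(w)` with a second summand that does not depend on `q`; hence the arc
inequalities `S(q₁) < S(q₂)` become `Y_{q₁} < Y_{q₂}`. The bounds on `Y_q` only use `1 ≤ f ≤ k`.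
-/

open Finset

theorem Acyclic.irrefl {V : Type} {A : V → V → Prop} (hacyc : Acyclic A) (v : V) : ¬ A v v :=
  fun h => hacyc v (Relation.TransGen.single h)

variable {V : Type} [Fintype V] [DecidableEq V]

section Clique

variable (A : V → V → Prop) [DecidableRel A] (f : V → ℕ) (Q : Finset V)

/-- The paper's `Y_q`. -/
def cliqueExcess (q : V) : ℤ := ∑ w ∈ nbr A q \ Q, (f w : ℤ) - f q

variable {A Q}

theorem nbr_inter_clique_eq_erase (hirr : ∀ v, ¬ A v v)
    (hclique : ∀ q₁ ∈ Q, ∀ q₂ ∈ Q, q₁ ≠ q₂ → (A q₁ q₂ ∨ A q₂ q₁)) {q : V} (hq : q ∈ Q) :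
    nbr A q ∩ Q = Q.erase q := by
  ext w
  simp only [mem_inter, mem_erase, nbr, mem_filter, mem_univ, true_and]
  constructor
  · rintro ⟨hadj, hw⟩
    refine ⟨?_, hw⟩
    rintro rfl
    exact hirr w (hadj.elim id id)
  · rintro ⟨hne, hw⟩
    exact ⟨hclique q hq w hw (Ne.symm hne), hw⟩

theorem Svert_eq_cliqueExcess_add (hirr : ∀ v, ¬ A v v)
    (hclique : ∀ q₁ ∈ Q, ∀ q₂ ∈ Q, q₁ ≠ q₂ → (A q₁ q₂ ∨ A q₂ q₁)) {q : V} (hq : q ∈ Q) :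
    (Svert A f q : ℤ) = cliqueExcess A f Q q + ∑ w ∈ Q, (f w : ℤ) := by
  have hsplit : ∑ w ∈ nbr A q, (f w : ℤ) =
      ∑ w ∈ nbr A q \ Q, (f w : ℤ) + ∑ w ∈ nbr A q ∩ Q, (f w : ℤ) := by
    rw [← sum_union (disjoint_sdiff_inter _ _), sdiff_union_inter]
  rw [Svert, Nat.cast_sum, hsplit, nbr_inter_clique_eq_erase hirr hclique hq,
    sum_erase_eq_sub hq, cliqueExcess]
  ring

theorem cliqueExcess_lt_of_arc (hirr : ∀ v, ¬ A v v)
    (hclique : ∀ q₁ ∈ Q, ∀ q₂ ∈ Q, q₁ ≠ q₂ → (A q₁ q₂ ∨ A q₂ q₁))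
    (hS : ∀ u v, A u v → Svert A f u < Svert A f v)
    {q₁ q₂ : V} (hq₁ : q₁ ∈ Q) (hq₂ : q₂ ∈ Q) (harc : A q₁ q₂) :
    cliqueExcess A f Q q₁ < cliqueExcess A f Q q₂ := by
  have h := hS q₁ q₂ harc
  zify at h
  rw [Svert_eq_cliqueExcess_add f hirr hclique hq₁,
    Svert_eq_cliqueExcess_add f hirr hclique hq₂] at h
  exact lt_of_add_lt_add_right h

variable {f}

theorem card_sub_le_cliqueExcess {k : ℕ} (hpos : ∀ v, 1 ≤ f v) (hk : ∀ v, f v ≤ k) (q : V) :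
    ((nbr A q \ Q).card : ℤ) - k ≤ cliqueExcess A f Q q := by
  have hsum : ((nbr A q \ Q).card : ℤ) ≤ ∑ w ∈ nbr A q \ Q, (f w : ℤ) := by
    simpa using card_nsmul_le_sum (nbr A q \ Q) (fun w => (f w : ℤ)) 1
      fun w _ => by exact_mod_cast hpos w
  have hfq : (f q : ℤ) ≤ k := by exact_mod_cast hk q
  unfold cliqueExcess
  omega

theorem cliqueExcess_le_mul_card_sub {k : ℕ} (hpos : ∀ v, 1 ≤ f v) (hk : ∀ v, f v ≤ k) (q : V) :
    cliqueExcess A f Q q ≤ k * ((nbr A q \ Q).card : ℤ) - 1 := by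
  have hsum : ∑ w ∈ nbr A q \ Q, (f w : ℤ) ≤ k * ((nbr A q \ Q).card : ℤ) := by
    simpa [mul_comm] using sum_le_card_nsmul (nbr A q \ Q) (fun w => (f w : ℤ)) k
      fun w _ => by exact_mod_cast hk w
  have hfq : (1 : ℤ) ≤ f q := by exact_mod_cast hpos q
  unfold cliqueExcess
  omega

end Clique

/-- for a clique `Q` and a topological additive `k`-numbering `f`, the quantity
`Y_q = Σ_{w ∈ N(q)∖Q} f(w) − f(q)` is strictly increasing along arcs within `Q` and satisfies
`|N(q)∖Q| − k ≤ Y_q ≤ k·|N(q)∖Q| − 1`. -/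
theorem stmt_15 {V : Type} [Fintype V] [DecidableEq V] (A : V → V → Prop) [DecidableRel A]
    (hacyc : Acyclic A) (k : ℕ) (f : V → ℕ)
    (htan : IsTAN A f) (hk : ∀ v, f v ≤ k)
    (Q : Finset V) (hclique : ∀ q₁ ∈ Q, ∀ q₂ ∈ Q, q₁ ≠ q₂ → (A q₁ q₂ ∨ A q₂ q₁)) :
    (∀ q₁ ∈ Q, ∀ q₂ ∈ Q, A q₁ q₂ →
      (∑ w ∈ (nbr A q₁) \ Q, (f w : ℤ)) - f q₁ < (∑ w ∈ (nbr A q₂) \ Q, (f w : ℤ)) - f q₂) ∧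
    (∀ q ∈ Q, ((((nbr A q) \ Q).card : ℤ) - k ≤ (∑ w ∈ (nbr A q) \ Q, (f w : ℤ)) - f q ∧
      (∑ w ∈ (nbr A q) \ Q, (f w : ℤ)) - f q ≤ k * (((nbr A q) \ Q).card : ℤ) - 1)) :=
  ⟨fun _ hq₁ _ hq₂ harc =>
      cliqueExcess_lt_of_arc f hacyc.irrefl hclique htan.2 hq₁ hq₂ harc,
    fun q _ => ⟨card_sub_le_cliqueExcess htan.1 hk q, cliqueExcess_le_mul_card_sub htan.1 hk q⟩⟩
end
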